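/- Let a > 0. For b ∈ ℝ and t > 0 set q^b(t) := (b/√(2π t³)) e^{−b²/(2t)}, and define p^{a,a}(t) := Σ_{k=−∞}^{∞} (−1)^k q^{a(1+2k)}(t) (this series converges absolutely for each t > 0; p^{a,a} is the density of the exit time of a standard Brownian motion from the interval (−a, a)). Then for every β > 0 there exist δ > 0 and Δ > 0 such that for all 0 < ε < Δ one has ∫₀^δ | p^{a,a}(t + ε) − p^{a,a}(t) | dt ≤ β ε. -/

import Mathlib

open MeasureTheory Real Nat

noncomputable section

/-- `q^b(t) = (b/√(2π t³)) e^{−b²/(2t)}` (negative for `b < 0`). -/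
def hitDensity (b t : ℝ) : ℝ :=
  b / Real.sqrt (2 * Real.pi * t ^ 3) * Real.exp (-(b ^ 2) / (2 * t))

/-- Density of the exit time of a standard Brownian motion from `(−a, a)`:
`p^{a,a}(t) = Σ_{k ∈ ℤ} (−1)^k q^{a(1+2k)}(t)`. -/
def exitDensity (a t : ℝ) : ℝ :=
  ∑' k : ℤ, (-1 : ℝ) ^ k * hitDensity (a * (1 + 2 * (k : ℝ))) t

lemma pow_le_factorial_mul_exp (x : ℝ) (hx : 0 ≤ x) (n : ℕ) : x ^ n ≤ n ! * Real.exp x := by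
  have h := Real.sum_le_exp_of_nonneg hx (n+1)
  have h2 : x ^ n / n ! ≤ ∑ i ∈ Finset.range (n+1), x ^ i / i ! := by
    apply Finset.single_le_sum (f := fun i => x ^ i / (i ! : ℝ))
    · intro i _; positivity
    · simp
  have h3 : (0:ℝ) < n ! := by positivity
  rw [div_le_iff₀ h3] at h2
  calc x ^ n ≤ (∑ i ∈ Finset.range (n+1), x ^ i / i !) * n ! := h2
    _ ≤ Real.exp x * n ! := by nlinarith
    _ = n ! * Real.exp x := by ring

lemma pow_mul_exp_neg_le (x : ℝ) (hx : 0 ≤ x) (n : ℕ) : x ^ n * Real.exp (-x) ≤ n ! := by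
  have h := pow_le_factorial_mul_exp x hx n
  have he : 0 < Real.exp x := Real.exp_pos x
  rw [Real.exp_neg, ← div_eq_mul_inv, div_le_iff₀ he]
  exact h

lemma natAbs_le_sq (k : ℤ) : ((k.natAbs : ℝ)) ≤ (1 + 2*(k:ℝ))^2 := by
  have h : (k.natAbs : ℤ) ≤ (1 + 2*k)^2 := by
    rcases le_or_gt 0 k with h | h
    · rw [Int.natAbs_of_nonneg h]; nlinarith
    · have hk : k ≤ -1 := by omega
      rw [Int.ofNat_natAbs_of_nonpos h.le]
      nlinarith [mul_nonneg (by linarith : (0:ℤ) ≤ -(4*k+1)) (by linarith : (0:ℤ) ≤ -(k+1))]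
  calc ((k.natAbs : ℝ)) = ((k.natAbs : ℤ) : ℝ) := (Int.cast_natCast _).symm
    _ ≤ (((1+2*k)^2 : ℤ) : ℝ) := by exact_mod_cast h
    _ = (1 + 2*(k:ℝ))^2 := by push_cast; ring

lemma sumExp (s : ℝ) (hs : 0 < s) :
    Summable fun k : ℤ => Real.exp (-s * (1 + 2*(k:ℝ))^2) := by
  have hr : Real.exp (-s) < 1 := Real.exp_lt_one_iff.2 (by linarith)
  have hr0 : 0 ≤ Real.exp (-s) := (Real.exp_pos _).le
  have hsum : Summable fun k : ℤ => Real.exp (-s) ^ k.natAbs := by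
    apply Summable.of_nat_of_neg_add_one
    · simpa using summable_geometric_of_lt_one hr0 hr
    · simp only [Int.natAbs_neg]
      have : ∀ n : ℕ, Real.exp (-s) ^ ((n:ℤ)+1).natAbs = Real.exp (-s) * Real.exp (-s) ^ n := by
        intro n
        rw [show ((n:ℤ)+1).natAbs = n + 1 by omega]
        ring
      simp only [this]
      exact (summable_geometric_of_lt_one hr0 hr).mul_left _
  apply hsum.of_nonneg_of_le (fun k => (Real.exp_pos _).le)
  intro k
  rw [← Real.exp_nat_mul]
  apply Real.exp_le_exp.2
  have := natAbs_le_sq k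
  nlinarith

lemma abs_hitDensity_le (b t : ℝ) (ht : 0 < t) :
    |hitDensity b t| ≤ 2 / t * Real.exp (-(b ^ 2) / (4 * t)) := by
  have hpi := Real.pi_pos
  have hst : 0 < Real.sqrt t := Real.sqrt_pos.2 ht
  have hX : 0 < 2 * Real.pi * t ^ 3 := by positivity
  have hS : 0 < Real.sqrt (2 * Real.pi * t ^ 3) := Real.sqrt_pos.2 hX
  have habs : |hitDensity b t|
      = |b| / Real.sqrt (2 * Real.pi * t ^ 3) * Real.exp (-(b ^ 2) / (2 * t)) := by
    unfold hitDensity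
    rw [abs_mul, abs_div, abs_of_nonneg hS.le, abs_of_nonneg (Real.exp_pos _).le]
  have hSge : t * Real.sqrt t ≤ Real.sqrt (2 * Real.pi * t ^ 3) := by
    have h1 : t ^ 3 ≤ 2 * Real.pi * t ^ 3 := by nlinarith [pow_pos ht 3, Real.pi_gt_three]
    calc t * Real.sqrt t = Real.sqrt (t^2) * Real.sqrt t := by
          rw [Real.sqrt_sq ht.le]
      _ = Real.sqrt (t^2 * t) := (Real.sqrt_mul (by positivity) _).symm
      _ = Real.sqrt (t^3) := by ring_nf
      _ ≤ _ := Real.sqrt_le_sqrt h1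
  have hv : 0 ≤ b ^ 2 / (4 * t) := by positivity
  have hexp1 : b ^ 2 / (4 * t) + 1 ≤ Real.exp (b ^ 2 / (4 * t)) := Real.add_one_le_exp _
  have hbexp : |b| * Real.exp (-(b ^ 2) / (4 * t)) ≤ 2 * Real.sqrt t := by
    have h3 : Real.sqrt t ^ 2 = t := Real.sq_sqrt ht.le
    have h2 : |b| ≤ 2 * Real.sqrt t * (b ^ 2 / (4 * t) + 1) := by
      have hsq : b ^ 2 ≤ (2 * Real.sqrt t * (b ^ 2 / (4 * t) + 1)) ^ 2 := by
        have expand : (2 * Real.sqrt t * (b ^ 2 / (4 * t) + 1)) ^ 2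
            = 4 * t * (b ^ 2 / (4 * t) + 1) ^ 2 := by
          rw [mul_pow, mul_pow]; rw [h3]; ring
        rw [expand]
        have hb4 : b ^ 2 = 4 * t * (b ^ 2 / (4 * t)) := by field_simp
        nlinarith [sq_nonneg (b ^ 2 / (4 * t)), ht]
      calc |b| = Real.sqrt (b ^ 2) := (Real.sqrt_sq_eq_abs b).symm
        _ ≤ Real.sqrt ((2 * Real.sqrt t * (b ^ 2 / (4 * t) + 1)) ^ 2) := Real.sqrt_le_sqrt hsq
        _ = 2 * Real.sqrt t * (b ^ 2 / (4 * t) + 1) := Real.sqrt_sq (by positivity)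
    have hnegeq : Real.exp (-(b ^ 2) / (4 * t)) = Real.exp (-(b ^ 2 / (4 * t))) := by ring_nf
    rw [hnegeq, Real.exp_neg]
    have hE : 0 < Real.exp (b ^ 2 / (4 * t)) := Real.exp_pos _
    rw [mul_inv_le_iff₀ hE]
    calc |b| ≤ 2 * Real.sqrt t * (b ^ 2 / (4 * t) + 1) := h2
      _ ≤ 2 * Real.sqrt t * Real.exp (b ^ 2 / (4 * t)) := by
          apply mul_le_mul_of_nonneg_left hexp1 (by positivity)
  have hsplit : Real.exp (-(b ^ 2) / (2 * t))
      = Real.exp (-(b ^ 2) / (4 * t)) * Real.exp (-(b ^ 2) / (4 * t)) := by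
    rw [← Real.exp_add]; congr 1; field_simp; ring
  rw [habs, hsplit]
  have hE4 : 0 < Real.exp (-(b ^ 2) / (4 * t)) := Real.exp_pos _
  calc |b| / Real.sqrt (2 * Real.pi * t ^ 3)
        * (Real.exp (-(b ^ 2) / (4 * t)) * Real.exp (-(b ^ 2) / (4 * t)))
      ≤ |b| / (t * Real.sqrt t)
        * (Real.exp (-(b ^ 2) / (4 * t)) * Real.exp (-(b ^ 2) / (4 * t))) := by
        apply mul_le_mul_of_nonneg_right _ (by positivity)
        exact div_le_div_of_nonneg_left (abs_nonneg b) (by positivity) hSge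
    _ = (|b| * Real.exp (-(b ^ 2) / (4 * t))) / (t * Real.sqrt t)
        * Real.exp (-(b ^ 2) / (4 * t)) := by ring
    _ ≤ (2 * Real.sqrt t) / (t * Real.sqrt t) * Real.exp (-(b ^ 2) / (4 * t)) := by
        apply mul_le_mul_of_nonneg_right _ hE4.le
        exact div_le_div_of_nonneg_right hbexp (by positivity)
    _ = 2 / t * Real.exp (-(b ^ 2) / (4 * t)) := by
        congr 1
        field_simp

lemma hitDensity_hasDerivAt (b t : ℝ) (ht : 0 < t) :
    HasDerivAt (fun u => hitDensity b u)
      (hitDensity b t * ((b ^ 2 - 3 * t) / (2 * t ^ 2))) t := by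
  have hpi := Real.pi_pos
  have hX : 0 < 2 * Real.pi * t ^ 3 := by positivity
  have hS : 0 < Real.sqrt (2 * Real.pi * t ^ 3) := Real.sqrt_pos.2 hX
  have hS2 : Real.sqrt (2 * Real.pi * t ^ 3) ^ 2 = 2 * Real.pi * t ^ 3 :=
    Real.sq_sqrt hX.le
  have h1 : HasDerivAt (fun u : ℝ => 2 * Real.pi * u ^ 3) (2 * Real.pi * (3 * t ^ 2)) t := by
    simpa using (hasDerivAt_pow 3 t).const_mul (2 * Real.pi)
  have h2 : HasDerivAt (fun u : ℝ => Real.sqrt (2 * Real.pi * u ^ 3))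
      (2 * Real.pi * (3 * t ^ 2) / (2 * Real.sqrt (2 * Real.pi * t ^ 3))) t :=
    h1.sqrt hX.ne'
  have h3 : HasDerivAt (fun u : ℝ => b / Real.sqrt (2 * Real.pi * u ^ 3))
      ((0 * Real.sqrt (2 * Real.pi * t ^ 3) -
        b * (2 * Real.pi * (3 * t ^ 2) / (2 * Real.sqrt (2 * Real.pi * t ^ 3)))) /
        (Real.sqrt (2 * Real.pi * t ^ 3)) ^ 2) t :=
    (hasDerivAt_const t b).div h2 hS.ne'
  have h4 : HasDerivAt (fun u : ℝ => -(b ^ 2) / (2 * u))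
      ((0 * (2 * t) - (-(b ^ 2)) * 2) / (2 * t) ^ 2) t :=
    (hasDerivAt_const t (-(b ^ 2))).div (by simpa using (hasDerivAt_id t).const_mul (2:ℝ))
      (by positivity)
  have h5 := h4.exp
  have h6 := h3.mul h5
  refine h6.congr_deriv ?_
  symm
  unfold hitDensity
  set S := Real.sqrt (2 * Real.pi * t ^ 3) with hSdef
  have hpieq : Real.pi = S ^ 2 / (2 * t ^ 3) := by rw [hS2]; field_simp
  rw [hpieq]
  field_simp
  ring

lemma hitDeriv_bound (a b t T : ℝ) (ha : 0 < a) (hab : a ≤ |b|) (ht : 0 < t)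
    (htT : t ≤ T) (hT1 : T ≤ 1) :
    |hitDensity b t * ((b ^ 2 - 3 * t) / (2 * t ^ 2))|
      ≤ 55296 * T / a ^ 6 * Real.exp (-(b ^ 2) / 16) := by
  have hb0 : b ≠ 0 := by
    intro h; rw [h, abs_zero] at hab; linarith
  have hb2 : 0 < b ^ 2 := by positivity
  have hT : 0 < T := lt_of_lt_of_le ht htT
  have hE8 : 0 < Real.exp (-(b ^ 2) / (8 * t)) := Real.exp_pos _
  -- step 1 : bound the hit density and the polynomial factor
  have h1 : |hitDensity b t * ((b ^ 2 - 3 * t) / (2 * t ^ 2))|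
      ≤ 2 / t * Real.exp (-(b ^ 2) / (4 * t)) * ((b ^ 2 + 3 * t) / (2 * t ^ 2)) := by
    rw [abs_mul]
    apply mul_le_mul (abs_hitDensity_le b t ht) _ (abs_nonneg _) (by positivity)
    rw [abs_div, abs_of_nonneg (by positivity : (0:ℝ) ≤ 2 * t ^ 2)]
    apply div_le_div_of_nonneg_right _ (by positivity)
    calc |b ^ 2 - 3 * t| ≤ |b ^ 2| + |3 * t| := abs_sub _ _
      _ = b ^ 2 + 3 * t := by
          rw [abs_of_nonneg (by positivity : (0:ℝ) ≤ b ^ 2),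
            abs_of_nonneg (by positivity : (0:ℝ) ≤ 3 * t)]
  -- split the exponential
  have hsplit : Real.exp (-(b ^ 2) / (4 * t))
      = Real.exp (-(b ^ 2) / (8 * t)) * Real.exp (-(b ^ 2) / (8 * t)) := by
    rw [← Real.exp_add]; congr 1; field_simp; ring
  -- claim A
  set w := b ^ 2 / (8 * t) with hwdef
  have hw : 0 < w := by positivity
  have hnegw : -(b ^ 2) / (8 * t) = -w := by rw [hwdef]; ring
  have hb2w : b ^ 2 = 8 * t * w := by rw [hwdef]; field_simp
  have e3 : w ^ 3 * Real.exp (-w) ≤ 6 := by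
    have := pow_mul_exp_neg_le w hw.le 3
    norm_num at this; exact this
  have e2 : w ^ 2 * Real.exp (-w) ≤ 2 := by
    have := pow_mul_exp_neg_le w hw.le 2
    norm_num at this; exact this
  have claimA : 2 / t * Real.exp (-(b ^ 2) / (8 * t)) * ((b ^ 2 + 3 * t) / (2 * t ^ 2))
      ≤ 3456 / b ^ 4 := by
    rw [hnegw]
    have hEw : 0 < Real.exp (-w) := Real.exp_pos _
    have key : (b ^ 2 + 3 * t) * Real.exp (-w) * b ^ 4 ≤ 3456 * t ^ 3 := by
      have hb4 : b ^ 4 = 64 * t ^ 2 * w ^ 2 := by rw [hwdef]; field_simp; ring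
      have hb6 : b ^ 2 * b ^ 4 = 512 * t ^ 3 * w ^ 3 := by rw [hwdef]; field_simp; ring
      have k1 : b ^ 2 * b ^ 4 * Real.exp (-w) ≤ 3072 * t ^ 3 := by
        rw [hb6]
        nlinarith [e3, pow_pos ht 3]
      have k2 : 3 * t * b ^ 4 * Real.exp (-w) ≤ 384 * t ^ 3 := by
        rw [hb4]
        nlinarith [e2, pow_pos ht 3]
      nlinarith [k1, k2]
    have hrw : 2 / t * Real.exp (-w) * ((b ^ 2 + 3 * t) / (2 * t ^ 2))
        = (b ^ 2 + 3 * t) * Real.exp (-w) / t ^ 3 := by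
      field_simp
    rw [hrw, div_le_div_iff₀ (by positivity) (by positivity)]
    linarith [key]
  -- claim B
  have claimB : Real.exp (-(b ^ 2) / (8 * t))
      ≤ 16 * T / b ^ 2 * Real.exp (-(b ^ 2) / 16) := by
    have s1 : Real.exp (-(b ^ 2) / (8 * t)) ≤ Real.exp (-(b ^ 2) / (8 * T)) := by
      apply Real.exp_le_exp.2
      rw [neg_div, neg_div, neg_le_neg_iff]
      exact div_le_div_of_nonneg_left hb2.le (by positivity) (by linarith)
    have s2 : Real.exp (-(b ^ 2) / (8 * T))
        = Real.exp (-(b ^ 2) / (16 * T)) * Real.exp (-(b ^ 2) / (16 * T)) := by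
      rw [← Real.exp_add]; congr 1; field_simp; ring
    have s3 : Real.exp (-(b ^ 2) / (16 * T)) ≤ 16 * T / b ^ 2 := by
      have hx : 0 < b ^ 2 / (16 * T) := by positivity
      have h1 : b ^ 2 / (16 * T) ≤ Real.exp (b ^ 2 / (16 * T)) := by
        have := Real.add_one_le_exp (b ^ 2 / (16 * T)); linarith
      have h2 : Real.exp (-(b ^ 2) / (16 * T)) = (Real.exp (b ^ 2 / (16 * T)))⁻¹ := by
        rw [← Real.exp_neg]; congr 1; ring
      rw [h2]
      rw [inv_le_comm₀ (Real.exp_pos _) (by positivity)]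
      calc (16 * T / b ^ 2)⁻¹ = b ^ 2 / (16 * T) := by
            rw [inv_div]
        _ ≤ Real.exp (b ^ 2 / (16 * T)) := h1
    have s4 : Real.exp (-(b ^ 2) / (16 * T)) ≤ Real.exp (-(b ^ 2) / 16) := by
      apply Real.exp_le_exp.2
      rw [neg_div, neg_div, neg_le_neg_iff]
      calc b ^ 2 / 16 = b ^ 2 / (16 * 1) := by norm_num
        _ ≤ b ^ 2 / (16 * T) := by
            exact div_le_div_of_nonneg_left hb2.le (by positivity) (by nlinarith)
    calc Real.exp (-(b ^ 2) / (8 * t))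
        ≤ Real.exp (-(b ^ 2) / (16 * T)) * Real.exp (-(b ^ 2) / (16 * T)) := by
          rw [← s2]; exact s1
      _ ≤ (16 * T / b ^ 2) * Real.exp (-(b ^ 2) / 16) := by
          apply mul_le_mul s3 s4 (Real.exp_pos _).le (by positivity)
  -- combine
  have hb6a : a ^ 6 ≤ b ^ 6 := by
    calc a ^ 6 ≤ |b| ^ 6 := pow_le_pow_left₀ ha.le hab 6
      _ = b ^ 6 := by rw [← abs_pow, abs_of_nonneg (by positivity)]
  calc |hitDensity b t * ((b ^ 2 - 3 * t) / (2 * t ^ 2))|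
      ≤ 2 / t * Real.exp (-(b ^ 2) / (4 * t)) * ((b ^ 2 + 3 * t) / (2 * t ^ 2)) := h1
    _ = (2 / t * Real.exp (-(b ^ 2) / (8 * t)) * ((b ^ 2 + 3 * t) / (2 * t ^ 2)))
        * Real.exp (-(b ^ 2) / (8 * t)) := by rw [hsplit]; ring
    _ ≤ (3456 / b ^ 4) * (16 * T / b ^ 2 * Real.exp (-(b ^ 2) / 16)) := by
        apply mul_le_mul claimA claimB hE8.le (by positivity)
    _ = 55296 * T / b ^ 6 * Real.exp (-(b ^ 2) / 16) := by
        field_simp; ring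
    _ ≤ 55296 * T / a ^ 6 * Real.exp (-(b ^ 2) / 16) := by
        apply mul_le_mul_of_nonneg_right _ (Real.exp_pos _).le
        apply div_le_div_of_nonneg_left (by positivity) (by positivity) hb6a

/-- Summability of the absolute series, for any `t > 0`. -/
lemma summable_abs_exit (a : ℝ) (ha : 0 < a) (t : ℝ) (ht : 0 < t) :
    Summable fun k : ℤ => |(-1 : ℝ) ^ k * hitDensity (a * (1 + 2 * (k : ℝ))) t| := by
  have hs : 0 < a ^ 2 / (4 * t) := by positivity
  refine Summable.of_nonneg_of_le (fun k => abs_nonneg _) (fun k => ?_)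
    ((sumExp _ hs).mul_left (2 / t))
  have h1 : |(-1 : ℝ) ^ k * hitDensity (a * (1 + 2 * (k : ℝ))) t|
        = |hitDensity (a * (1 + 2 * (k : ℝ))) t| := by
    rw [abs_mul, abs_neg_one_zpow, one_mul]
  rw [h1]
  calc |hitDensity (a * (1 + 2 * (k : ℝ))) t|
      ≤ 2 / t * Real.exp (-((a * (1 + 2 * (k : ℝ))) ^ 2) / (4 * t)) :=
        abs_hitDensity_le _ t ht
    _ = 2 / t * Real.exp (-(a ^ 2 / (4 * t)) * (1 + 2 * (k : ℝ)) ^ 2) := by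
        congr 1; congr 1; field_simp

set_option maxHeartbeats 1000000 in
/-- The series defining `p^{a,a}` converges absolutely for each `t > 0`, and
`∫₀^δ |p^{a,a}(t+ε) − p^{a,a}(t)| dt ≤ β ε` for suitable `δ` and all small `ε > 0`. -/
theorem stmt17 (a : ℝ) (ha : 0 < a) :
    (∀ t : ℝ, 0 < t →
      Summable fun k : ℤ => |(-1 : ℝ) ^ k * hitDensity (a * (1 + 2 * (k : ℝ))) t|) ∧
    ∀ β : ℝ, 0 < β →
      ∃ δ > (0 : ℝ), ∃ Δ > (0 : ℝ), ∀ ε : ℝ, 0 < ε → ε < Δ →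
        (∫ t in Set.Ioo (0 : ℝ) δ, |exitDensity a (t + ε) - exitDensity a t|) ≤ β * ε := by
  constructor
  · exact fun t ht => summable_abs_exit a ha t ht
  intro β hβ
  set K : ℝ := 55296 / a ^ 6 with hK
  have hK0 : 0 < K := by positivity
  have hSsum : Summable (fun k : ℤ => Real.exp (-(a ^ 2 / 16) * (1 + 2 * (k : ℝ)) ^ 2)) :=
    sumExp _ (by positivity)
  set S : ℝ := ∑' k : ℤ, Real.exp (-(a ^ 2 / 16) * (1 + 2 * (k : ℝ)) ^ 2) with hS
  have hS0 : 0 ≤ S := tsum_nonneg (fun k => (Real.exp_pos _).le)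
  set T : ℝ := min 1 (β / (K * (S + 1))) with hT
  have hT0 : 0 < T := lt_min one_pos (by positivity)
  have hT1 : T ≤ 1 := min_le_left _ _
  have hTβ : K * T * S ≤ β := by
    have h1 : T ≤ β / (K * (S + 1)) := min_le_right _ _
    have h2 : 0 < K * (S + 1) := by positivity
    have h3 : T * (K * (S + 1)) ≤ β := by
      rw [← le_div_iff₀ h2]; exact h1
    nlinarith
  refine ⟨T / 2, by positivity, T / 2, by positivity, ?_⟩
  intro ε hε hεT
  set M : ℤ → ℝ := fun k => K * T * Real.exp (-(a ^ 2 / 16) * (1 + 2 * (k : ℝ)) ^ 2) with hM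
  have hMsum : Summable M := hSsum.mul_left _
  have hMS : ∑' k : ℤ, M k = K * T * S := by
    rw [hM, tsum_mul_left, hS]
  -- per-term Lipschitz estimate on `Ioc 0 T`
  have lip : ∀ k : ℤ, ∀ x ∈ Set.Ioc (0:ℝ) T, ∀ y ∈ Set.Ioc (0:ℝ) T,
      |hitDensity (a * (1 + 2 * (k : ℝ))) y - hitDensity (a * (1 + 2 * (k : ℝ))) x|
        ≤ M k * |y - x| := by
    intro k x hx y hy
    set b := a * (1 + 2 * (k : ℝ)) with hb
    have hone : (1:ℝ) ≤ |1 + 2 * (k : ℝ)| := by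
      have h1 : (1:ℤ) ≤ |1 + 2 * k| := Int.one_le_abs (by omega)
      calc (1:ℝ) = ((1:ℤ):ℝ) := by norm_num
        _ ≤ ((|1 + 2 * k| : ℤ) : ℝ) := by exact_mod_cast h1
        _ = |1 + 2 * (k : ℝ)| := by push_cast; ring
    have hab : a ≤ |b| := by
      rw [hb, abs_mul, abs_of_nonneg ha.le]
      nlinarith
    have hbound : ∀ u ∈ Set.Ioc (0:ℝ) T,
        ‖hitDensity b u * ((b ^ 2 - 3 * u) / (2 * u ^ 2))‖ ≤ M k := by
      intro u hu
      rw [Real.norm_eq_abs]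
      calc |hitDensity b u * ((b ^ 2 - 3 * u) / (2 * u ^ 2))|
          ≤ 55296 * T / a ^ 6 * Real.exp (-(b ^ 2) / 16) :=
            hitDeriv_bound a b u T ha hab hu.1 hu.2 hT1
        _ = M k := by
            rw [hM, hK, hb]
            have : -((a * (1 + 2 * (k : ℝ))) ^ 2) / 16
                = -(a ^ 2 / 16) * (1 + 2 * (k : ℝ)) ^ 2 := by ring
            rw [this]
            ring
    have := Convex.norm_image_sub_le_of_norm_hasDerivWithin_le
      (f := fun u => hitDensity b u)
      (f' := fun u => hitDensity b u * ((b ^ 2 - 3 * u) / (2 * u ^ 2)))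
      (s := Set.Ioc (0:ℝ) T)
      (fun u hu => (hitDensity_hasDerivAt b u hu.1).hasDerivWithinAt)
      hbound (convex_Ioc _ _) hx hy
    simpa [Real.norm_eq_abs] using this
  -- pointwise estimate on the increments of the exit density
  have pointwise : ∀ t ∈ Set.Ioo (0:ℝ) (T / 2),
      |exitDensity a (t + ε) - exitDensity a t| ≤ K * T * S * ε := by
    intro t ht
    have ht1 : t ∈ Set.Ioc (0:ℝ) T := ⟨ht.1, by linarith [ht.2]⟩
    have ht2 : t + ε ∈ Set.Ioc (0:ℝ) T := ⟨by linarith [ht.1], by linarith [ht.2]⟩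
    have hsum1 : Summable (fun k : ℤ => (-1 : ℝ) ^ k * hitDensity (a * (1 + 2 * (k : ℝ))) (t + ε)) :=
      (summable_abs_exit a ha (t + ε) (by linarith [ht.1])).of_abs
    have hsum2 : Summable (fun k : ℤ => (-1 : ℝ) ^ k * hitDensity (a * (1 + 2 * (k : ℝ))) t) :=
      (summable_abs_exit a ha t ht.1).of_abs
    have hdiff_le : ∀ k : ℤ,
        |(-1 : ℝ) ^ k * hitDensity (a * (1 + 2 * (k : ℝ))) (t + ε)
          - (-1 : ℝ) ^ k * hitDensity (a * (1 + 2 * (k : ℝ))) t| ≤ M k * ε := by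
      intro k
      have h1 : (-1 : ℝ) ^ k * hitDensity (a * (1 + 2 * (k : ℝ))) (t + ε)
          - (-1 : ℝ) ^ k * hitDensity (a * (1 + 2 * (k : ℝ))) t
          = (-1 : ℝ) ^ k * (hitDensity (a * (1 + 2 * (k : ℝ))) (t + ε)
            - hitDensity (a * (1 + 2 * (k : ℝ))) t) := by ring
      rw [h1, abs_mul, abs_neg_one_zpow, one_mul]
      have := lip k t ht1 (t + ε) ht2
      have hee : |t + ε - t| = ε := by
        rw [show t + ε - t = ε by ring, abs_of_pos hε]
      rw [hee] at this
      exact this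
    have habs_sum : Summable (fun k : ℤ =>
        |(-1 : ℝ) ^ k * hitDensity (a * (1 + 2 * (k : ℝ))) (t + ε)
          - (-1 : ℝ) ^ k * hitDensity (a * (1 + 2 * (k : ℝ))) t|) :=
      Summable.of_nonneg_of_le (fun k => abs_nonneg _) hdiff_le (hMsum.mul_right ε)
    have hdiff_eq : exitDensity a (t + ε) - exitDensity a t
        = ∑' k : ℤ, ((-1 : ℝ) ^ k * hitDensity (a * (1 + 2 * (k : ℝ))) (t + ε)
          - (-1 : ℝ) ^ k * hitDensity (a * (1 + 2 * (k : ℝ))) t) := by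
      rw [exitDensity, exitDensity, ← Summable.tsum_sub hsum1 hsum2]
    rw [hdiff_eq]
    calc |∑' k : ℤ, ((-1 : ℝ) ^ k * hitDensity (a * (1 + 2 * (k : ℝ))) (t + ε)
          - (-1 : ℝ) ^ k * hitDensity (a * (1 + 2 * (k : ℝ))) t)|
        ≤ ∑' k : ℤ, |(-1 : ℝ) ^ k * hitDensity (a * (1 + 2 * (k : ℝ))) (t + ε)
          - (-1 : ℝ) ^ k * hitDensity (a * (1 + 2 * (k : ℝ))) t| := by
          simpa [Real.norm_eq_abs] using norm_tsum_le_tsum_norm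
            (f := fun k : ℤ => (-1 : ℝ) ^ k * hitDensity (a * (1 + 2 * (k : ℝ))) (t + ε)
              - (-1 : ℝ) ^ k * hitDensity (a * (1 + 2 * (k : ℝ))) t)
            (by simpa [Real.norm_eq_abs] using habs_sum)
      _ ≤ ∑' k : ℤ, M k * ε := Summable.tsum_le_tsum hdiff_le habs_sum (hMsum.mul_right ε)
      _ = (∑' k : ℤ, M k) * ε := tsum_mul_right
      _ = K * T * S * ε := by rw [hMS]
  -- integrate
  have hfin : volume (Set.Ioo (0:ℝ) (T / 2)) < ⊤ := measure_Ioo_lt_top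
  have hnorm := norm_setIntegral_le_of_norm_le_const_ae' (μ := volume)
    (f := fun t => |exitDensity a (t + ε) - exitDensity a t|)
    (C := K * T * S * ε) hfin
    (Filter.Eventually.of_forall (fun t ht => by
      rw [Real.norm_eq_abs, abs_abs]; exact pointwise t ht))
  have hvol : (volume (Set.Ioo (0:ℝ) (T / 2))).toReal = T / 2 := by
    rw [Real.volume_Ioo, ENNReal.toReal_ofReal (by linarith)]
    ring
  calc (∫ t in Set.Ioo (0 : ℝ) (T / 2), |exitDensity a (t + ε) - exitDensity a t|)
      ≤ ‖∫ t in Set.Ioo (0 : ℝ) (T / 2), |exitDensity a (t + ε) - exitDensity a t|‖ :=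
        le_abs_self _
    _ ≤ K * T * S * ε * (volume (Set.Ioo (0:ℝ) (T / 2))).toReal := hnorm
    _ = K * T * S * ε * (T / 2) := by rw [hvol]
    _ ≤ β * ε := by
        have h1 : K * T * S * ε ≤ β * ε := mul_le_mul_of_nonneg_right hTβ hε.le
        have h2 : 0 ≤ K * T * S * ε :=
          mul_nonneg (mul_nonneg (mul_nonneg hK0.le hT0.le) hS0) hε.le
        nlinarith [h1, h2, hT1, hT0, hβ, hε]
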